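/- Let I be a finite index set, (b_i)_{i∈I} natural numbers, (g_i)_{i∈I} integers, and m ∈ ℤ. Then d(⋃_{i∈I}(g_i + b_iℤ)) ≥ d(⋃_{i∈I}(m·g_i + b_iℤ)), where d denotes natural density. -/

import Mathlib

open Filter

open scoped Classical in
/-- Counting function for the two-sided density of a subset of `ℤ`. -/
noncomputable def cnt (E : Set ℤ) (n : ℕ) : ℝ :=
  (((Finset.Icc (-(n : ℤ)) n).filter (fun i => i ∈ E)).card : ℝ) / (2 * n + 1)

/-!
Both unions are periodic modulo `ℓ = ∏ bᵢ`, so their densities exist and equal `|S| / ℓ`, where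
`S ⊆ ℤ/ℓ` is the union of the cosets `gᵢ + bᵢ(ℤ/ℓ)`, resp. `m gᵢ + bᵢ(ℤ/ℓ)`. It remains to see that
multiplying the representatives of a finite union of ideal cosets in `ℤ/ℓ` by `m` cannot make the
union larger. This property passes to a product of finite rings: counting the union fibrewise over
one factor, the two coordinates of `m` can be applied one at a time. By the Chinese remainder
theorem it therefore reduces to `ℤ/pᵏ`, whose ideals form a chain. There the coset of a largest
ideal of the family contains every coset of the family that meets it, before and after scaling,
and is disjoint from all the others, so one can induct on the remaining cosets.
-/

open Topology
open scoped Finset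

theorem Set.ncard_eq_sum_ncard_fiber_snd {α β : Type*} [Fintype α] [Fintype β]
    (T : Set (α × β)) : T.ncard = ∑ z : β, {y | (y, z) ∈ T}.ncard := by
  classical
  simp only [Set.ncard_eq_toFinset_card', Set.toFinset_ofPred, Finset.card_filter]
  rw [← Fintype.sum_prod_type_right (fun p => if p ∈ T then 1 else 0), ← Finset.card_filter]
  congr 1
  ext; simp

section CosetUnion

variable {ι R S : Type*} [CommRing R] [CommRing S]

def cosetUnion (I : Finset ι) (H : ι → Ideal R) (x : ι → R) : Set R :=
  {y | ∃ i ∈ I, y - x i ∈ H i}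

def CosetUnionMulNcardLE (ι R : Type*) [CommRing R] : Prop :=
  ∀ (I : Finset ι) (H : ι → Ideal R) (x : ι → R) (m : R),
    (cosetUnion I H (m • x)).ncard ≤ (cosetUnion I H x).ncard

theorem ncard_setOf_sub_mem_eq (H : Ideal R) (a b : R) :
    {y | y - a ∈ H}.ncard = {y | y - b ∈ H}.ncard := by
  have : {y | y - a ∈ H} = (· + (b - a)) ⁻¹' {y | y - b ∈ H} := by
    ext y
    simp only [Set.mem_ofPred_eq, Set.mem_preimage, show y + (b - a) - b = y - a by abel]
  rw [this, Set.ncard_preimage_of_injective_subset_range (add_left_injective _)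
    fun y _ => add_right_surjective (b - a) y]

theorem cosetUnion_mono {I J : Finset ι} (h : I ⊆ J) (H : ι → Ideal R) (x : ι → R) :
    cosetUnion I H x ⊆ cosetUnion J H x :=
  fun _ ⟨i, hi, hy⟩ => ⟨i, h hi, hy⟩

theorem CosetUnionMulNcardLE.of_preValuationRing [Finite R] [PreValuationRing R] :
    CosetUnionMulNcardLE ι R := by
  classical
  intro I
  induction I using Finset.strongInduction with
  | H I ih =>
  intro H x m
  rcases I.eq_empty_or_nonempty with rfl | hne
  · simp [cosetUnion]
  obtain ⟨i₀, hi₀, hmax⟩ := I.exists_maximalFor H hne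
  have hle : ∀ j ∈ I, H j ≤ H i₀ := fun j hj =>
    ((PreValuationRing.iff_ideal_total.mp inferInstance).total (H j) (H i₀)).elim id (hmax hj)
  set K := I.filter fun j => x j - x i₀ ∉ H i₀
  have hK : K ⊂ I := Finset.filter_ssubset.2 ⟨i₀, hi₀, by simp⟩
  have hsub : cosetUnion I H (m • x) ⊆ {y | y - m * x i₀ ∈ H i₀} ∪ cosetUnion K H (m • x) := by
    rintro y ⟨j, hj, hy⟩
    by_cases hjK : x j - x i₀ ∈ H i₀
    · left
      have := (H i₀).add_mem (hle j hj hy) ((H i₀).mul_mem_left m hjK)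
      simp only [Pi.smul_apply, smul_eq_mul] at this
      rwa [show y - m * x j + m * (x j - x i₀) = y - m * x i₀ by ring] at this
    · exact Or.inr ⟨j, Finset.mem_filter.2 ⟨hj, hjK⟩, hy⟩
  have hdisj : Disjoint {y | y - x i₀ ∈ H i₀} (cosetUnion K H x) := by
    rw [Set.disjoint_left]
    rintro y hy ⟨j, hj, hyj⟩
    apply (Finset.mem_filter.1 hj).2
    have := (H i₀).sub_mem hy (hle j (Finset.mem_filter.1 hj).1 hyj)
    rwa [sub_sub_sub_cancel_left] at this
  calc (cosetUnion I H (m • x)).ncard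
      ≤ ({y | y - m * x i₀ ∈ H i₀} ∪ cosetUnion K H (m • x)).ncard := Set.ncard_le_ncard hsub
    _ ≤ {y | y - m * x i₀ ∈ H i₀}.ncard + (cosetUnion K H (m • x)).ncard := Set.ncard_union_le _ _
    _ ≤ {y | y - x i₀ ∈ H i₀}.ncard + (cosetUnion K H x).ncard :=
        add_le_add (ncard_setOf_sub_mem_eq _ _ _).le (ih K hK H x m)
    _ = ({y | y - x i₀ ∈ H i₀} ∪ cosetUnion K H x).ncard := (Set.ncard_union_eq hdisj).symm
    _ ≤ (cosetUnion I H x).ncard := Set.ncard_le_ncard <| Set.union_subset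
        (fun y hy => ⟨i₀, hi₀, hy⟩) (cosetUnion_mono (Finset.filter_subset _ _) H x)

theorem preimage_cosetUnion {F : Type*} [FunLike F R S] [RingHomClass F R S] (f : F)
    (I : Finset ι) (H : ι → Ideal S) (x : ι → R) :
    f ⁻¹' cosetUnion I H (f ∘ x) = cosetUnion I (fun i => (H i).comap f) x := by
  ext y
  simp [cosetUnion, map_sub]

theorem ncard_cosetUnion_comp_ringEquiv (e : R ≃+* S) (I : Finset ι) (H : ι → Ideal S)
    (x : ι → R) :
    (cosetUnion I H (e ∘ x)).ncard = (cosetUnion I (fun i => (H i).comap e) x).ncard := by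
  rw [← preimage_cosetUnion e]
  exact (Set.ncard_preimage_of_injective_subset_range e.injective
    fun y _ => e.surjective y).symm

theorem CosetUnionMulNcardLE.of_ringEquiv (e : R ≃+* S) (h : CosetUnionMulNcardLE ι R) :
    CosetUnionMulNcardLE ι S := by
  intro I H x m
  have hx : x = e ∘ (e.symm ∘ x) := by ext; simp
  have hmx : m • x = e ∘ (e.symm m • (e.symm ∘ x)) := by ext; simp
  rw [hmx, ncard_cosetUnion_comp_ringEquiv]
  conv_rhs => rw [hx, ncard_cosetUnion_comp_ringEquiv]
  exact h _ _ _ _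

theorem mem_cosetUnion_prod {I : Finset ι} {H : ι → Ideal (R × S)} {x : ι → R × S}
    {y : R × S} : y ∈ cosetUnion I H x ↔ ∃ i ∈ I,
      y.1 - (x i).1 ∈ (H i).map (RingHom.fst R S) ∧
      y.2 - (x i).2 ∈ (H i).map (RingHom.snd R S) := by
  simp only [cosetUnion, Set.mem_ofPred_eq]
  refine exists_congr fun i => and_congr_right fun _ => ?_
  conv_lhs => rw [Ideal.ideal_prod_eq (H i), Ideal.mem_prod]
  rfl

open scoped Classical in
theorem ncard_cosetUnion_prod [Fintype R] [Fintype S] (I : Finset ι)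
    (H : ι → Ideal (R × S)) (x : ι → R × S) :
    (cosetUnion I H x).ncard = ∑ z : S,
      (cosetUnion {i ∈ I | z - (x i).2 ∈ (H i).map (RingHom.snd R S)}
        (fun i => (H i).map (RingHom.fst R S)) (fun i => (x i).1)).ncard := by
  rw [Set.ncard_eq_sum_ncard_fiber_snd]
  refine Finset.sum_congr rfl fun z _ => congrArg Set.ncard (Set.ext fun y => ?_)
  rw [Set.mem_ofPred_eq, mem_cosetUnion_prod]
  simp only [cosetUnion, Set.mem_ofPred_eq, Finset.mem_filter]
  exact exists_congr fun i => by tauto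

theorem ncard_cosetUnion_fst_smul_le [Fintype R] [Fintype S] (hR : CosetUnionMulNcardLE ι R)
    (I : Finset ι) (H : ι → Ideal (R × S)) (x : ι → R × S) (μ : R) :
    (cosetUnion I H ((μ, (1 : S)) • x)).ncard ≤ (cosetUnion I H x).ncard := by
  classical
  rw [ncard_cosetUnion_prod, ncard_cosetUnion_prod]
  refine Finset.sum_le_sum fun z _ => ?_
  have hfst : ∀ i, (((μ, (1 : S)) • x) i).1 = μ * (x i).1 := fun i => rfl
  have hsnd : ∀ i, (((μ, (1 : S)) • x) i).2 = (x i).2 := fun i => one_mul _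
  simp only [hfst, hsnd]
  exact hR _ _ (fun i => (x i).1) μ

theorem CosetUnionMulNcardLE.prod [Fintype R] [Fintype S] (hR : CosetUnionMulNcardLE ι R)
    (hS : CosetUnionMulNcardLE ι S) : CosetUnionMulNcardLE ι (R × S) := by
  intro I H x m
  let e : S × R ≃+* R × S := RingEquiv.prodComm
  have hsnd : (cosetUnion I H (((1 : R), m.2) • x)).ncard ≤ (cosetUnion I H x).ncard := by
    have h := ncard_cosetUnion_fst_smul_le hS I (fun i => (H i).comap e) (e.symm ∘ x) m.2
    rwa [← ncard_cosetUnion_comp_ringEquiv e, ← ncard_cosetUnion_comp_ringEquiv e,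
      show e ∘ ((m.2, (1 : R)) • (e.symm ∘ x)) = ((1 : R), m.2) • x by ext <;> simp [e],
      show e ∘ (e.symm ∘ x) = x by ext <;> simp] at h
  calc (cosetUnion I H (m • x)).ncard
        = (cosetUnion I H ((m.1, (1 : S)) • ((1 : R), m.2) • x)).ncard := by
        rw [smul_smul, Prod.mk_mul_mk, mul_one, one_mul]
    _ ≤ (cosetUnion I H (((1 : R), m.2) • x)).ncard := ncard_cosetUnion_fst_smul_le hR _ _ _ _
    _ ≤ (cosetUnion I H x).ncard := hsnd

end CosetUnion

instance ZMod.instPreValuationRingPrimePow (p n : ℕ) [Fact p.Prime] :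
    PreValuationRing (ZMod (p ^ n)) :=
  Function.Surjective.preValuationRing
    (PadicInt.toZModPow n : ℤ_[p] →+* ZMod (p ^ n)).toMonoidHom.toMulHom
    (ZMod.ringHom_surjective (PadicInt.toZModPow n))

theorem cosetUnionMulNcardLE_zmod {ι : Type*} {ℓ : ℕ} (hℓ : ℓ ≠ 0) :
    CosetUnionMulNcardLE ι (ZMod ℓ) := by
  induction ℓ using Nat.recOnPrimeCoprime with
  | zero => exact absurd rfl hℓ
  | prime_pow p n hp =>
    have := Fact.mk hp
    have : NeZero (p ^ n) := ⟨hℓ⟩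
    exact .of_preValuationRing
  | coprime a b ha hb hab iha ihb =>
    have : NeZero a := ⟨by omega⟩
    have : NeZero b := ⟨by omega⟩
    exact ((iha (by omega)).prod (ihb (by omega))).of_ringEquiv (ZMod.chineseRemainder hab).symm

theorem abs_card_Icc_filter_modEq_sub_le {r : ℕ} (hr : 0 < r) (v : ℤ) (N : ℕ) :
    |(#{x ∈ Finset.Icc (-N : ℤ) N | x ≡ v [ZMOD r]} : ℝ) - (2 * N + 1) / r| ≤ 1 := by
  have hIcc : Finset.Icc (-N : ℤ) N = Finset.Ico (-(N : ℤ)) (N + 1) := by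
    ext; simp only [Finset.mem_Icc, Finset.mem_Ico]; omega
  have hcard := Int.Ico_filter_modEq_card (-N) (N + 1) (r := r) (by exact_mod_cast hr) v
  set A : ℚ := ((N + 1 : ℤ) - v) / ((r : ℤ) : ℚ)
  set B : ℚ := ((-N : ℤ) - v) / ((r : ℤ) : ℚ)
  have hrq : (0 : ℚ) < r := by exact_mod_cast hr
  have hAB : A - B = (2 * N + 1) / r := by
    simp only [A, B]
    push_cast
    field_simp
    ring
  have hBA : ⌈B⌉ ≤ ⌈A⌉ :=
    Int.ceil_mono (by linarith [div_pos (by positivity : (0 : ℚ) < 2 * N + 1) hrq])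
  rw [max_eq_left (sub_nonneg.2 hBA)] at hcard
  have hq : |((#{x ∈ Finset.Ico (-N : ℤ) (N + 1) | x ≡ v [ZMOD r]} : ℤ) : ℚ) - (2 * N + 1) / r|
      ≤ 1 := by
    rw [hcard, abs_le]
    push_cast
    constructor <;>
      linarith [Int.le_ceil A, Int.ceil_lt_add_one A, Int.le_ceil B, Int.ceil_lt_add_one B]
  have hR := (Rat.cast_le (K := ℝ)).2 hq
  push_cast at hR
  rwa [hIcc]

theorem cnt_eq (E : Set ℤ) [DecidablePred (· ∈ E)] (N : ℕ) :
    cnt E N = #{i ∈ Finset.Icc (-N : ℤ) N | i ∈ E} / (2 * N + 1) := by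
  rw [cnt, Finset.filter_congr_decidable]

theorem tendsto_cnt_modEq {r : ℕ} (hr : 0 < r) (v : ℤ) :
    Tendsto (cnt {n | n ≡ v [ZMOD r]}) atTop (𝓝 (1 / r)) := by
  have hbound : ∀ N : ℕ, ‖cnt {n | n ≡ v [ZMOD r]} N - 1 / r‖ ≤ 1 / (2 * N + 1) := by
    intro N
    have hN : (0 : ℝ) < 2 * N + 1 := by positivity
    have h := abs_card_Icc_filter_modEq_sub_le hr v N
    rw [Real.norm_eq_abs, cnt_eq, show (1 : ℝ) / r = (2 * N + 1) / r / (2 * N + 1) by field_simp,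
      ← sub_div, abs_div, abs_of_pos hN]
    gcongr
    simpa only [Set.mem_ofPred_eq] using h
  have hlim : Tendsto (fun N : ℕ => 1 / (2 * (N : ℝ) + 1)) atTop (𝓝 0) := by
    simpa only [one_div, Pi.inv_def] using
      ((tendsto_natCast_atTop_atTop.const_mul_atTop two_pos).atTop_add
        tendsto_const_nhds).inv_tendsto_atTop
  exact tendsto_iff_norm_sub_tendsto_zero.2 (squeeze_zero (fun _ => norm_nonneg _) hbound hlim)

theorem tendsto_cnt_preimage_intCast {ℓ : ℕ} [NeZero ℓ] (S : Set (ZMod ℓ)) :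
    Tendsto (cnt ((↑) ⁻¹' S)) atTop (𝓝 (S.ncard / ℓ)) := by
  classical
  have hsplit : cnt ((↑) ⁻¹' S) =
      fun N => ∑ s ∈ S.toFinset, cnt {n | n ≡ (s.cast : ℤ) [ZMOD ℓ]} N := by
    funext N
    simp only [cnt_eq, ← Finset.sum_div]
    congr 1
    rw [Finset.card_eq_sum_card_fiberwise (f := ((↑) : ℤ → ZMod ℓ)) (t := S.toFinset)
      fun x hx => by simpa using (Finset.mem_filter.1 hx).2]
    push_cast
    refine Finset.sum_congr rfl fun s hs => ?_
    have hcast : ∀ x : ℤ, (x : ZMod ℓ) = s ↔ x ≡ s.cast [ZMOD ℓ] := fun x => by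
      rw [← ZMod.intCast_eq_intCast_iff, ZMod.intCast_zmod_cast]
    congr 2
    ext x
    simp only [Finset.mem_filter, Set.mem_preimage, Set.mem_ofPred_eq, ← hcast]
    exact ⟨fun h => ⟨h.1.1, h.2⟩, fun h => ⟨⟨h.1, h.2 ▸ Set.mem_toFinset.1 hs⟩, h.2⟩⟩
  rw [hsplit, Set.ncard_eq_toFinset_card']
  simpa [Finset.sum_const, div_eq_mul_inv] using
    tendsto_finsetSum S.toFinset fun s _ => tendsto_cnt_modEq (NeZero.pos ℓ) s.cast

theorem ZMod.intCast_mem_span_natCast_iff {b ℓ : ℕ} (h : b ∣ ℓ) (n : ℤ) :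
    (n : ZMod ℓ) ∈ Ideal.span {(b : ZMod ℓ)} ↔ (b : ℤ) ∣ n := by
  rw [Ideal.mem_span_singleton]
  constructor
  · rintro ⟨c, hc⟩
    have := congrArg (ZMod.castHom h (ZMod b)) hc
    rw [map_intCast, map_mul, map_natCast, ZMod.natCast_self, zero_mul] at this
    exact (ZMod.intCast_zmod_eq_zero_iff_dvd n b).1 this
  · rintro ⟨k, rfl⟩
    exact ⟨k, by push_cast; rfl⟩

theorem rogers_inequality {ι : Type*} (I : Finset ι) (b : ι → ℕ)
    (hb : ∀ i ∈ I, 0 < b i) (g : ι → ℤ) (m : ℤ) :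
    ∃ L L' : ℝ,
      Filter.Tendsto (cnt {n : ℤ | ∃ i ∈ I, ((b i : ℕ) : ℤ) ∣ (n - g i)})
        Filter.atTop (nhds L) ∧
      Filter.Tendsto (cnt {n : ℤ | ∃ i ∈ I, ((b i : ℕ) : ℤ) ∣ (n - m * g i)})
        Filter.atTop (nhds L') ∧
      L' ≤ L := by
  set ℓ := ∏ i ∈ I, b i
  have hℓ : ℓ ≠ 0 := (Finset.prod_pos hb).ne'
  have : NeZero ℓ := ⟨hℓ⟩
  let H : ι → Ideal (ZMod ℓ) := fun i => Ideal.span {(b i : ZMod ℓ)}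
  have hE : ∀ c : ι → ℤ, {n : ℤ | ∃ i ∈ I, ((b i : ℕ) : ℤ) ∣ (n - c i)} =
      (↑) ⁻¹' cosetUnion I H (fun i => (c i : ZMod ℓ)) := fun c => by
    ext n
    simp only [Set.mem_ofPred_eq, Set.mem_preimage, cosetUnion]
    refine exists_congr fun i => and_congr_right fun hi => ?_
    rw [← Int.cast_sub, ZMod.intCast_mem_span_natCast_iff (Finset.dvd_prod_of_mem b hi)]
  have hmg : (fun i => ((m * g i : ℤ) : ZMod ℓ)) = (m : ZMod ℓ) • fun i => (g i : ZMod ℓ) := by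
    ext; simp
  rw [hE g, hE (fun i => m * g i), hmg]
  exact ⟨_, _, tendsto_cnt_preimage_intCast _, tendsto_cnt_preimage_intCast _,
    div_le_div_of_nonneg_right (Nat.cast_le.2 (cosetUnionMulNcardLE_zmod hℓ I H _ _))
      (Nat.cast_nonneg ℓ)⟩
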